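/- arXiv:1609.07235 — 4 statements merged into one kernel-verified Lean document; each statement's English description precedes it below -/
import Mathlib

section
/- For every s with 0 < s < 1 and every c with 0 < c < ∞, there exists a compact hereditarily non uniformly perfect set K ⊆ ℝ such that dim_H K = s and H^s(K) = c. -/
open MeasureTheory Filter Metric

/-- A compact set `F` with at least two points is uniformly perfect if there is `c > 0`
such that for every `a ∈ F` and every `r` with `0 < r < diam F` the annulus
`{y : c·r < ‖y − a‖ < r}` meets `F`. -/
def UniformlyPerfect {X : Type*} [NormedAddCommGroup X] (F : Set X) : Prop :=
  IsCompact F ∧ F.Nontrivial ∧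
    ∃ c : ℝ, 0 < c ∧ ∀ a ∈ F, ∀ r : ℝ, 0 < r → r < Metric.diam F →
      ∃ y ∈ F, c * r < ‖y - a‖ ∧ ‖y - a‖ < r

/-- A compact set is hereditarily non uniformly perfect (HNUP) if no (compact) subset
of it is uniformly perfect. -/
def HNUP {X : Type*} [NormedAddCommGroup X] (E : Set X) : Prop :=
  ∀ F : Set X, F ⊆ E → ¬ UniformlyPerfect F

/-!
The set is a Cantor set with `k` branches at each level whose pieces shrink by the factor
`ρ = 1/(k+1)` from one level to the next, except at the levels `2 ^ j`, where they crash down to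
size `q ^ 2 ^ j` with `q = k^(-1/s) < ρ`. The crash ratios tend to `0`, so every point of the set
sees relatively huge empty annuli at arbitrarily small scales, which no uniformly perfect subset
survives. The pieces of level `n` have size at least `q ^ n = k^(-n/s)`, so reading the digits of a
point in base `k` is an `s`-Hölder map onto `[0, 1]`, whence `H^s > 0`; covering by the `k ^ 2 ^ j`
pieces of level `2 ^ j` gives `H^s ≤ 1`. A dilation then makes the measure exactly `c`, which also
forces the dimension to be `s`.
-/

open Set
open scoped ENNReal NNReal Pointwise Topology

section Scaling

variable {𝕜 X : Type*} [NormedField 𝕜] [NormedAddCommGroup X] [NormedSpace 𝕜 X]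

theorem UniformlyPerfect.smul₀ {F : Set X} (hF : UniformlyPerfect F) {a : 𝕜} (ha : a ≠ 0) :
    UniformlyPerfect (a • F) := by
  obtain ⟨hFc, hFnt, c, hc, hF⟩ := hF
  have ha' : 0 < ‖a‖ := norm_pos_iff.mpr ha
  refine ⟨hFc.smul a, hFnt.image (smul_right_injective X ha), c, hc, ?_⟩
  rintro _ ⟨x, hx, rfl⟩ r hr hrF
  rw [diam_smul₀, ← div_lt_iff₀' ha'] at hrF
  obtain ⟨y, hy, hcy, hyr⟩ := hF x hx (r / ‖a‖) (by positivity) hrF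
  refine ⟨a • y, smul_mem_smul_set hy, ?_, ?_⟩ <;> rw [← smul_sub, norm_smul]
  · calc c * r = ‖a‖ * (c * (r / ‖a‖)) := by field_simp
      _ < ‖a‖ * ‖y - x‖ := by gcongr
  · calc ‖a‖ * ‖y - x‖ < ‖a‖ * (r / ‖a‖) := by gcongr
      _ = r := by field_simp

theorem HNUP.smul₀ {E : Set X} (hE : HNUP E) {a : 𝕜} (ha : a ≠ 0) : HNUP (a • E) := by
  intro F hF hUP
  refine hE (a⁻¹ • F) ?_ (hUP.smul₀ (inv_ne_zero ha))
  rw [← inv_smul_smul₀ ha E]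
  exact smul_set_mono hF

end Scaling

theorem HolderOnWith.of_dist_le {X Y : Type*} [PseudoMetricSpace X] [PseudoMetricSpace Y]
    {C r : ℝ≥0} {f : X → Y} {s : Set X}
    (h : ∀ x ∈ s, ∀ y ∈ s, dist (f x) (f y) ≤ C * dist x y ^ (r : ℝ)) :
    HolderOnWith C r f s := by
  intro x hx y hy
  calc edist (f x) (f y) = ENNReal.ofReal (dist (f x) (f y)) := edist_dist _ _
    _ ≤ ENNReal.ofReal (C * dist x y ^ (r : ℝ)) := ENNReal.ofReal_le_ofReal (h x hx y hy)
    _ = C * edist x y ^ (r : ℝ) := by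
      rw [ENNReal.ofReal_mul C.coe_nonneg,
        ← ENNReal.ofReal_rpow_of_nonneg dist_nonneg r.coe_nonneg, ← edist_dist,
        ENNReal.ofReal_coe_nnreal]

section CodingMap

variable {k : ℕ} {W : ℕ → ℝ}

/-- Weight of the `n`-th digit, chosen so that fixing the first `n` digits leaves a set of
diameter at most `W n`. -/
noncomputable def digitWeight (k : ℕ) (W : ℕ → ℝ) (n : ℕ) : ℝ := (W n - W (n + 1)) / (k - 1)

noncomputable def codingMap (k : ℕ) (W : ℕ → ℝ) (a : ℕ → Fin k) : ℝ :=
  ∑' n, ((a n : ℕ) : ℝ) * digitWeight k W n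

lemma hasSum_sub_succ (hW : Antitone W) (hW0 : Tendsto W atTop (𝓝 0)) :
    HasSum (fun n ↦ W n - W (n + 1)) (W 0) := by
  rw [hasSum_iff_tendsto_nat_of_nonneg fun n ↦ sub_nonneg.mpr (hW n.le_succ)]
  simp_rw [Finset.sum_range_sub']
  simpa using tendsto_const_nhds.sub hW0

lemma digitWeight_nonneg (hW : Antitone W) (hk : 1 ≤ k) (n : ℕ) : 0 ≤ digitWeight k W n :=
  div_nonneg (sub_nonneg.mpr (hW n.le_succ)) (by rwa [sub_nonneg, Nat.one_le_cast])

lemma digitTerm_nonneg (hW : Antitone W) (a : ℕ → Fin k) (n : ℕ) :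
    0 ≤ ((a n : ℕ) : ℝ) * digitWeight k W n :=
  mul_nonneg (Nat.cast_nonneg _) (digitWeight_nonneg hW (a n).pos n)

lemma digitTerm_le (hW : Antitone W) (a : ℕ → Fin k) (n : ℕ) :
    ((a n : ℕ) : ℝ) * digitWeight k W n ≤ W n - W (n + 1) := by
  have ha : ((a n : ℕ) : ℝ) ≤ k - 1 := by
    rw [le_sub_iff_add_le]
    exact_mod_cast (a n).isLt
  rw [digitWeight, mul_div_left_comm]
  exact mul_le_of_le_one_right (sub_nonneg.mpr (hW n.le_succ))
    (div_le_one_of_le₀ ha ((Nat.cast_nonneg _).trans ha))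

lemma mul_le_digitWeight_sub (hk : 1 < k) {ρ : ℝ} {n : ℕ} (h : W (n + 1) ≤ ρ * W n) :
    (1 - k * ρ) / (k - 1) * W n ≤ digitWeight k W n - W (n + 1) := by
  have hk' : (0 : ℝ) < k - 1 := by
    rw [sub_pos, Nat.one_lt_cast]
    exact hk
  rw [digitWeight, div_mul_eq_mul_div, div_sub' hk'.ne', div_le_div_iff_of_pos_right hk']
  nlinarith

variable (hW : Antitone W) (hW0 : Tendsto W atTop (𝓝 0))
include hW hW0

lemma summable_digitTerm (a : ℕ → Fin k) :
    Summable fun n ↦ ((a n : ℕ) : ℝ) * digitWeight k W n :=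
  (hasSum_sub_succ hW hW0).summable.of_nonneg_of_le (digitTerm_nonneg hW a) (digitTerm_le hW a)

lemma tsum_digitTerm_add_mem_Icc (a : ℕ → Fin k) (n : ℕ) :
    ∑' m, ((a (m + n) : ℕ) : ℝ) * digitWeight k W (m + n) ∈ Icc 0 (W n) := by
  have hWn : Antitone fun m ↦ W (m + n) := fun i j hij ↦ hW (by omega)
  have hsum := hasSum_sub_succ hWn (hW0.comp (tendsto_add_atTop_nat n))
  simp only [zero_add, add_right_comm _ 1 n] at hsum
  refine ⟨tsum_nonneg fun m ↦ digitTerm_nonneg hW a _, ?_⟩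
  rw [← hsum.tsum_eq]
  exact Summable.tsum_le_tsum (fun m ↦ digitTerm_le hW a _)
    ((summable_nat_add_iff n).mpr (summable_digitTerm hW hW0 a)) hsum.summable

lemma codingMap_eq_sum_add_tsum (a : ℕ → Fin k) (n : ℕ) :
    codingMap k W a = ∑ i ∈ Finset.range n, ((a i : ℕ) : ℝ) * digitWeight k W i +
      ∑' m, ((a (m + n) : ℕ) : ℝ) * digitWeight k W (m + n) :=
  ((summable_digitTerm hW hW0 a).sum_add_tsum_nat_add n).symm

lemma abs_codingMap_sub_le {a b : ℕ → Fin k} {n : ℕ} (hab : ∀ i < n, a i = b i) :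
    |codingMap k W a - codingMap k W b| ≤ W n := by
  have hsum : ∑ i ∈ Finset.range n, ((a i : ℕ) : ℝ) * digitWeight k W i =
      ∑ i ∈ Finset.range n, ((b i : ℕ) : ℝ) * digitWeight k W i :=
    Finset.sum_congr rfl fun i hi ↦ by rw [hab i (Finset.mem_range.mp hi)]
  rw [codingMap_eq_sum_add_tsum hW hW0 a n, codingMap_eq_sum_add_tsum hW hW0 b n, hsum,
    add_sub_add_left_eq_sub]
  obtain ⟨ha0, haW⟩ := tsum_digitTerm_add_mem_Icc hW hW0 a n
  obtain ⟨hb0, hbW⟩ := tsum_digitTerm_add_mem_Icc hW hW0 b n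
  exact abs_sub_le_of_nonneg_of_le ha0 haW hb0 hbW

lemma digitWeight_sub_le_abs_codingMap_sub {a b : ℕ → Fin k} {n : ℕ}
    (hab : ∀ i < n, a i = b i) (hn : a n ≠ b n) :
    digitWeight k W n - W (n + 1) ≤ |codingMap k W a - codingMap k W b| := by
  have hsum : ∑ i ∈ Finset.range n, ((a i : ℕ) : ℝ) * digitWeight k W i =
      ∑ i ∈ Finset.range n, ((b i : ℕ) : ℝ) * digitWeight k W i :=
    Finset.sum_congr rfl fun i hi ↦ by rw [hab i (Finset.mem_range.mp hi)]
  have hdigit : 1 ≤ |((a n : ℕ) : ℝ) - (b n : ℕ)| :=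
    Nat.pairwise_one_le_dist (Fin.val_injective.ne hn)
  have hw := digitWeight_nonneg hW (a n).pos n
  rw [codingMap_eq_sum_add_tsum hW hW0 a (n + 1), codingMap_eq_sum_add_tsum hW hW0 b (n + 1),
    Finset.sum_range_succ, Finset.sum_range_succ, hsum]
  obtain ⟨ha0, haW⟩ := tsum_digitTerm_add_mem_Icc hW hW0 a (n + 1)
  obtain ⟨hb0, hbW⟩ := tsum_digitTerm_add_mem_Icc hW hW0 b (n + 1)
  generalize ∑' m, ((a (m + (n + 1)) : ℕ) : ℝ) * digitWeight k W (m + (n + 1)) = ta at *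
  generalize ∑' m, ((b (m + (n + 1)) : ℕ) : ℝ) * digitWeight k W (m + (n + 1)) = tb at *
  have hsplit : ∀ S : ℝ, S + (a n : ℕ) * digitWeight k W n + ta -
      (S + (b n : ℕ) * digitWeight k W n + tb) =
      (((a n : ℕ) : ℝ) - (b n : ℕ)) * digitWeight k W n - (tb - ta) := fun S ↦ by ring
  rw [hsplit]
  have := abs_sub_abs_le_abs_sub ((((a n : ℕ) : ℝ) - (b n : ℕ)) * digitWeight k W n) (tb - ta)
  rw [abs_mul, abs_of_nonneg hw] at this
  linarith [abs_sub_le_of_nonneg_of_le hb0 hbW ha0 haW, le_mul_of_one_le_left hw hdigit]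

lemma continuous_codingMap : Continuous (codingMap k W) :=
  continuous_tsum (fun n ↦ (continuous_of_discreteTopology
      (f := fun d : Fin k ↦ ((d : ℕ) : ℝ) * digitWeight k W n)).comp (continuous_apply n))
    (hasSum_sub_succ hW hW0).summable fun n a ↦ by
      rw [Real.norm_of_nonneg (digitTerm_nonneg hW a n)]
      exact digitTerm_le hW a n

lemma hausdorffMeasure_range_codingMap_le_liminf {s : ℝ} (hs : 0 ≤ s) :
    μH[s] (range (codingMap k W)) ≤
      liminf (fun n ↦ (k : ℝ≥0∞) ^ n * ENNReal.ofReal (W n) ^ s) atTop := by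
  set cylinder : ∀ n, (Fin n → Fin k) → Set ℝ :=
    fun n w ↦ codingMap k W '' {a | ∀ i : Fin n, a i = w i}
  have hdiam : ∀ n w, ediam (cylinder n w) ≤ ENNReal.ofReal (W n) := by
    intro n w
    refine ediam_le ?_
    rintro _ ⟨a, ha, rfl⟩ _ ⟨b, hb, rfl⟩
    rw [edist_dist, Real.dist_eq]
    exact ENNReal.ofReal_le_ofReal <| abs_codingMap_sub_le hW hW0 fun i hi ↦
      (ha ⟨i, hi⟩).trans (hb ⟨i, hi⟩).symm
  refine (Measure.hausdorffMeasure_le_liminf_sum s _ (fun n ↦ ENNReal.ofReal (W n)) ?_ cylinder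
    (.of_forall hdiam) (.of_forall fun n ↦ ?_)).trans (liminf_le_liminf (.of_forall fun n ↦ ?_))
  · simpa using ENNReal.tendsto_ofReal hW0
  · rintro _ ⟨a, rfl⟩
    exact mem_iUnion.mpr ⟨fun i ↦ a i, a, fun i ↦ rfl, rfl⟩
  · calc ∑ w, ediam (cylinder n w) ^ s ≤ ∑ _w : Fin n → Fin k, ENNReal.ofReal (W n) ^ s :=
          Finset.sum_le_sum fun w _ ↦ ENNReal.rpow_le_rpow (hdiam n w) hs
      _ = (k : ℝ≥0∞) ^ n * ENNReal.ofReal (W n) ^ s := by simp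

variable {β : ℝ} (hsep : ∀ n, β * W n ≤ digitWeight k W n - W (n + 1))
include hsep

lemma mul_le_abs_codingMap_sub {a b : ℕ → Fin k} (hab : a ≠ b) :
    β * W (PiNat.firstDiff a b) ≤ |codingMap k W a - codingMap k W b| :=
  (hsep _).trans <| digitWeight_sub_le_abs_codingMap_sub hW hW0
    (fun _ hi ↦ PiNat.apply_eq_of_lt_firstDiff hi) (PiNat.apply_firstDiff_ne hab)

lemma codingMap_injective (hβ : 0 < β) (hWpos : ∀ n, 0 < W n) :
    Function.Injective (codingMap k W) := by
  intro a b h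
  by_contra hab
  have := mul_le_abs_codingMap_sub hW hW0 hsep hab
  rw [h, sub_self, abs_zero] at this
  exact (mul_pos hβ (hWpos _)).not_ge this

theorem hnup_range_codingMap (hβ : 0 < β) (hWpos : ∀ n, 0 < W n)
    (hcrash : ∀ ε > 0, ∀ δ > 0, ∃ n, W n < δ ∧ W (n + 1) ≤ ε * W n) :
    HNUP (range (codingMap k W)) := by
  rintro F hF ⟨hFc, hFnt, c, hc, hUP⟩
  obtain ⟨n, hnF, hn⟩ := hcrash (c * β) (by positivity) (diam F / β)
    (div_pos (diam_pos hFnt hFc.isBounded) hβ)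
  obtain ⟨_, hx⟩ := hFnt.nonempty
  obtain ⟨_, hy, hcy, hyr⟩ :=
    hUP _ hx (β * W n) (mul_pos hβ (hWpos n)) (by rwa [lt_div_iff₀' hβ] at hnF)
  obtain ⟨a, rfl⟩ := hF hx
  obtain ⟨b, rfl⟩ := hF hy
  rw [Real.norm_eq_abs] at hcy hyr
  have hba : b ≠ a := by
    rintro rfl
    rw [sub_self, abs_zero] at hcy
    exact hcy.not_ge (by have := hWpos n; positivity)
  rcases lt_or_ge n (PiNat.firstDiff b a) with hlt | hle
  · -- the codes agree below level `n + 1`, so the points are closer than `c * (β * W n)`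
    have := abs_codingMap_sub_le hW hW0 (a := b) (b := a) (n := n + 1) fun i hi ↦
      PiNat.apply_eq_of_lt_firstDiff (by omega)
    nlinarith
  · -- the codes split at a level `≤ n`, so the points are at least `β * W n` apart
    have := (mul_le_mul_of_nonneg_left (hW hle) hβ.le).trans
      (mul_le_abs_codingMap_sub hW hW0 hsep hba)
    linarith

lemma abs_ofDigits_sub_le (hβ : 0 < β) (hWpos : ∀ n, 0 < W n) {s : ℝ} (hs : 0 ≤ s)
    (hWs : ∀ n, ((k : ℝ) ^ n)⁻¹ ≤ W n ^ s) (a b : ℕ → Fin k) :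
    |Real.ofDigits a - Real.ofDigits b| ≤ β ^ (-s) * |codingMap k W a - codingMap k W b| ^ s := by
  rcases eq_or_ne a b with rfl | hab
  · simp only [sub_self, abs_zero]
    positivity
  set n := PiNat.firstDiff a b
  calc |Real.ofDigits a - Real.ofDigits b| ≤ ((k : ℝ) ^ n)⁻¹ :=
        Real.abs_ofDigits_sub_ofDigits_le fun _ hi ↦ PiNat.apply_eq_of_lt_firstDiff hi
    _ ≤ W n ^ s := hWs n
    _ = β ^ (-s) * (β * W n) ^ s := by
        rw [Real.mul_rpow hβ.le (hWpos n).le, ← mul_assoc, ← Real.rpow_add hβ, neg_add_cancel,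
          Real.rpow_zero, one_mul]
    _ ≤ β ^ (-s) * |codingMap k W a - codingMap k W b| ^ s := by
        gcongr
        exacts [(mul_pos hβ (hWpos n)).le, mul_le_abs_codingMap_sub hW hW0 hsep hab]

theorem hausdorffMeasure_range_codingMap_ne_zero (hk : 1 < k) (hβ : 0 < β) {s : ℝ} (hs : 0 < s)
    (hWs : ∀ n, ((k : ℝ) ^ n)⁻¹ ≤ W n ^ s) :
    μH[s] (range (codingMap k W)) ≠ 0 := by
  have hWpos : ∀ n, 0 < W n := fun n ↦ by
    refine (hW.le_of_tendsto hW0 n).lt_of_ne fun h ↦ ?_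
    have := hWs n
    rw [← h, Real.zero_rpow hs.ne'] at this
    exact this.not_gt (by positivity)
  have : Nonempty (ℕ → Fin k) := ⟨fun _ ↦ ⟨0, by omega⟩⟩
  set π : ℝ → ℝ := fun x ↦ Real.ofDigits (Function.invFun (codingMap k W) x)
  have hπ : ∀ a, π (codingMap k W a) = Real.ofDigits a := fun a ↦ by
    simp only [π, Function.leftInverse_invFun (codingMap_injective hW hW0 hsep hβ hWpos) a]
  have hHolder : HolderOnWith (β ^ (-s)).toNNReal s.toNNReal π (range (codingMap k W)) := by
    refine HolderOnWith.of_dist_le ?_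
    rintro _ ⟨a, rfl⟩ _ ⟨b, rfl⟩
    rw [hπ, hπ, Real.dist_eq, Real.dist_eq, Real.coe_toNNReal _ (by positivity),
      Real.coe_toNNReal _ hs.le]
    exact abs_ofDigits_sub_le hW hW0 hsep hβ hWpos hs.le hWs a b
  have hIcc : Icc (0 : ℝ) 1 ⊆ π '' range (codingMap k W) := by
    intro y hy
    obtain ⟨a, -, rfl⟩ := Real.ofDigits_SurjOn hk hy
    exact ⟨codingMap k W a, mem_range_self a, hπ a⟩
  intro h0
  have := (measure_mono hIcc).trans
    (hHolder.hausdorffMeasure_image_le (Real.toNNReal_pos.mpr hs) zero_le_one)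
  rw [Real.coe_toNNReal _ hs.le, mul_one, h0, mul_zero, hausdorffMeasure_real,
    Real.volume_Icc] at this
  simp at this

end CodingMap

section CrashScale

def sinceCrash (n : ℕ) : ℕ := n - 2 ^ Nat.log 2 n

lemma sinceCrash_zero : sinceCrash 0 = 0 := rfl

lemma sinceCrash_two_pow (j : ℕ) : sinceCrash (2 ^ j) = 0 := by
  rw [sinceCrash, Nat.log_pow one_lt_two, Nat.sub_self]

lemma sinceCrash_succ {n : ℕ} (hn : ∀ j, n + 1 ≠ 2 ^ j) :
    sinceCrash (n + 1) = sinceCrash n + 1 := by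
  have hn0 : n ≠ 0 := by
    rintro rfl
    exact hn 0 rfl
  have hlog : Nat.log 2 (n + 1) = Nat.log 2 n :=
    Nat.log_eq_of_pow_le_of_lt_pow ((Nat.pow_log_le_self 2 hn0).trans n.le_succ)
      (lt_of_le_of_ne (Nat.lt_pow_succ_log_self one_lt_two n) (hn _))
  have := Nat.pow_log_le_self 2 hn0
  rw [sinceCrash, sinceCrash, hlog]
  omega

lemma sinceCrash_two_pow_succ_sub_one (j : ℕ) : sinceCrash (2 ^ (j + 1) - 1) = 2 ^ j - 1 := by
  have hpos := Nat.one_le_two_pow (n := j)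
  have hlog : Nat.log 2 (2 ^ (j + 1) - 1) = j :=
    Nat.log_eq_of_pow_le_of_lt_pow (by rw [pow_succ]; omega) (by omega)
  rw [sinceCrash, hlog, pow_succ]
  omega

/-- Scales shrinking by the factor `ρ` at each level, except that at level `2 ^ j` they crash
down to `q ^ 2 ^ j`, the value they would have had if they had always shrunk by `q < ρ`. -/
noncomputable def crashScale (q ρ : ℝ) (n : ℕ) : ℝ := q ^ n * (ρ / q) ^ sinceCrash n

variable {q ρ : ℝ}

lemma crashScale_zero : crashScale q ρ 0 = 1 := by
  rw [crashScale, sinceCrash_zero, pow_zero, pow_zero, mul_one]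

lemma crashScale_two_pow (j : ℕ) : crashScale q ρ (2 ^ j) = q ^ 2 ^ j := by
  rw [crashScale, sinceCrash_two_pow, pow_zero, mul_one]

lemma crashScale_pos (hq : 0 < q) (hρ : 0 < ρ) (n : ℕ) : 0 < crashScale q ρ n := by
  unfold crashScale
  positivity

variable (hq : 0 < q) (hqρ : q ≤ ρ)
include hq hqρ

lemma pow_le_crashScale (n : ℕ) : q ^ n ≤ crashScale q ρ n :=
  le_mul_of_one_le_right (by positivity) (one_le_pow₀ ((one_le_div hq).mpr hqρ))

lemma crashScale_succ_le (n : ℕ) : crashScale q ρ (n + 1) ≤ ρ * crashScale q ρ n := by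
  by_cases hn : ∃ j, n + 1 = 2 ^ j
  · obtain ⟨j, hj⟩ := hn
    rw [hj, crashScale_two_pow, ← hj, pow_succ']
    exact mul_le_mul hqρ (pow_le_crashScale hq hqρ n) (by positivity) (hq.le.trans hqρ)
  · push Not at hn
    rw [crashScale, crashScale, sinceCrash_succ hn, pow_succ, pow_succ]
    apply le_of_eq
    field_simp

lemma crashScale_le_pow (n : ℕ) : crashScale q ρ n ≤ ρ ^ n := by
  induction n with
  | zero => rw [crashScale_zero, pow_zero]
  | succ n ih =>
    rw [pow_succ']
    exact (crashScale_succ_le hq hqρ n).trans (mul_le_mul_of_nonneg_left ih (hq.le.trans hqρ))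

variable (hρ : ρ < 1)
include hρ

lemma antitone_crashScale : Antitone (crashScale q ρ) :=
  antitone_nat_of_succ_le fun n ↦ (crashScale_succ_le hq hqρ n).trans <|
    mul_le_of_le_one_left (crashScale_pos hq (hq.trans_le hqρ) n).le hρ.le

lemma tendsto_crashScale : Tendsto (crashScale q ρ) atTop (𝓝 0) :=
  squeeze_zero (fun n ↦ (crashScale_pos hq (hq.trans_le hqρ) n).le) (crashScale_le_pow hq hqρ)
    (tendsto_pow_atTop_nhds_zero_of_lt_one (hq.le.trans hqρ) hρ)

end CrashScale

lemma crashScale_two_pow_succ {q ρ : ℝ} (hq : q ≠ 0) (hρ : ρ ≠ 0) (j : ℕ) :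
    crashScale q ρ (2 ^ (j + 1)) =
      q * (q / ρ) ^ (2 ^ j - 1) * crashScale q ρ (2 ^ (j + 1) - 1) := by
  have h := Nat.one_le_two_pow (n := j + 1)
  rw [crashScale_two_pow, crashScale, sinceCrash_two_pow_succ_sub_one]
  conv_lhs => rw [← Nat.sub_add_cancel h, pow_succ']
  rw [mul_mul_mul_comm, ← mul_pow, div_mul_div_cancel₀ hρ, div_self hq, one_pow, mul_one]

lemma exists_crashScale_succ_le_mul {q ρ : ℝ} (hq : 0 < q) (hqρ : q < ρ) (hρ : ρ < 1)
    {ε δ : ℝ} (hε : 0 < ε) (hδ : 0 < δ) :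
    ∃ n, crashScale q ρ n < δ ∧ crashScale q ρ (n + 1) ≤ ε * crashScale q ρ n := by
  have hidx : Tendsto (fun j : ℕ ↦ 2 ^ j - 1) atTop atTop :=
    (tendsto_sub_atTop_nat 1).comp (tendsto_pow_atTop_atTop_of_one_lt one_lt_two)
  have hratio : Tendsto (fun j ↦ q * (q / ρ) ^ (2 ^ j - 1)) atTop (𝓝 0) := by
    simpa using ((tendsto_pow_atTop_nhds_zero_of_lt_one (div_nonneg hq.le (hq.trans hqρ).le)
      ((div_lt_one (hq.trans hqρ)).mpr hqρ)).comp hidx).const_mul q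
  obtain ⟨j, hjδ, hjε⟩ := ((((tendsto_crashScale hq hqρ.le hρ).comp
    (hidx.comp (tendsto_add_atTop_nat 1))).eventually (gt_mem_nhds hδ)).and
    (hratio.eventually (gt_mem_nhds hε))).exists
  refine ⟨2 ^ (j + 1) - 1, hjδ, ?_⟩
  rw [Nat.sub_add_cancel Nat.one_le_two_pow, crashScale_two_pow_succ hq.ne' (hq.trans hqρ).ne']
  exact mul_le_mul_of_nonneg_right hjε.le (crashScale_pos hq (hq.trans hqρ) _).le

lemma one_sub_mul_inv_add_one_div_sub_one_pos {k : ℕ} (hk : 1 < k) :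
    0 < (1 - k * ((k : ℝ) + 1)⁻¹) / (k - 1) := by
  have hk' : (1 : ℝ) < k := by exact_mod_cast hk
  refine div_pos ?_ (by linarith)
  rw [sub_pos, mul_inv_lt_iff₀ (by linarith)]
  linarith

noncomputable def crashCantor (k : ℕ) (q : ℝ) : Set ℝ :=
  range (codingMap k (crashScale q ((k : ℝ) + 1)⁻¹))

section CrashCantor

variable {k : ℕ} {q : ℝ} (hk : 1 < k) (hq : 0 < q) (hqk : q < ((k : ℝ) + 1)⁻¹)
include hk hq hqk

lemma antitone_crashScale_inv_add_one : Antitone (crashScale q ((k : ℝ) + 1)⁻¹) :=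
  antitone_crashScale hq hqk.le (inv_lt_one_of_one_lt₀ (by norm_cast; omega))

lemma tendsto_crashScale_inv_add_one :
    Tendsto (crashScale q ((k : ℝ) + 1)⁻¹) atTop (𝓝 0) :=
  tendsto_crashScale hq hqk.le (inv_lt_one_of_one_lt₀ (by norm_cast; omega))

lemma mul_crashScale_le_digitWeight_sub (n : ℕ) :
    (1 - k * ((k : ℝ) + 1)⁻¹) / (k - 1) * crashScale q ((k : ℝ) + 1)⁻¹ n ≤
      digitWeight k (crashScale q ((k : ℝ) + 1)⁻¹) n - crashScale q ((k : ℝ) + 1)⁻¹ (n + 1) :=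
  mul_le_digitWeight_sub hk (crashScale_succ_le hq hqk.le n)

theorem isCompact_crashCantor : IsCompact (crashCantor k q) :=
  isCompact_range <| continuous_codingMap (antitone_crashScale_inv_add_one hk hq hqk)
    (tendsto_crashScale_inv_add_one hk hq hqk)

theorem hnup_crashCantor : HNUP (crashCantor k q) :=
  hnup_range_codingMap (antitone_crashScale_inv_add_one hk hq hqk)
    (tendsto_crashScale_inv_add_one hk hq hqk) (mul_crashScale_le_digitWeight_sub hk hq hqk)
    (one_sub_mul_inv_add_one_div_sub_one_pos hk) (crashScale_pos hq (hq.trans hqk))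
    fun _ hε _ hδ ↦ exists_crashScale_succ_le_mul hq hqk
      (inv_lt_one_of_one_lt₀ (by norm_cast; omega)) hε hδ

theorem hausdorffMeasure_crashCantor_ne_zero {s : ℝ} (hs : 0 < s) (hqs : (k : ℝ)⁻¹ ≤ q ^ s) :
    μH[s] (crashCantor k q) ≠ 0 := by
  refine hausdorffMeasure_range_codingMap_ne_zero (antitone_crashScale_inv_add_one hk hq hqk)
    (tendsto_crashScale_inv_add_one hk hq hqk) (mul_crashScale_le_digitWeight_sub hk hq hqk) hk
    (one_sub_mul_inv_add_one_div_sub_one_pos hk) hs fun n ↦ ?_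
  calc ((k : ℝ) ^ n)⁻¹ = (k : ℝ)⁻¹ ^ n := (inv_pow _ _).symm
    _ ≤ (q ^ s) ^ n := pow_le_pow_left₀ (by positivity) hqs n
    _ = (q ^ n) ^ s := Real.rpow_pow_comm hq.le s n
    _ ≤ crashScale q ((k : ℝ) + 1)⁻¹ n ^ s :=
      Real.rpow_le_rpow (by positivity) (pow_le_crashScale hq hqk.le n) hs.le

theorem hausdorffMeasure_crashCantor_le_one {s : ℝ} (hs : 0 ≤ s) (hqs : q ^ s ≤ (k : ℝ)⁻¹) :
    μH[s] (crashCantor k q) ≤ 1 := by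
  refine (hausdorffMeasure_range_codingMap_le_liminf (antitone_crashScale_inv_add_one hk hq hqk)
    (tendsto_crashScale_inv_add_one hk hq hqk) hs).trans (liminf_le_of_frequently_le' ?_)
  refine (tendsto_pow_atTop_atTop_of_one_lt one_lt_two).frequently
    (Eventually.of_forall fun j ↦ ?_).frequently
  rw [crashScale_two_pow, ENNReal.ofReal_rpow_of_nonneg (by positivity) hs,
    ← Real.rpow_pow_comm hq.le]
  calc (k : ℝ≥0∞) ^ 2 ^ j * ENNReal.ofReal ((q ^ s) ^ 2 ^ j)
      ≤ (k : ℝ≥0∞) ^ 2 ^ j * ENNReal.ofReal ((k : ℝ)⁻¹ ^ 2 ^ j) := by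
        gcongr
    _ = 1 := by
        rw [ENNReal.ofReal_pow (by positivity), ENNReal.ofReal_inv_of_pos (by positivity),
          ENNReal.ofReal_natCast, ← mul_pow, ENNReal.mul_inv_cancel (by positivity) (by simp),
          one_pow]

end CrashCantor

lemma exists_nat_add_one_lt_rpow_inv {s : ℝ} (hs0 : 0 < s) (hs1 : s < 1) :
    ∃ k : ℕ, 1 < k ∧ (k : ℝ) + 1 < (k : ℝ) ^ s⁻¹ := by
  have hexp : 0 < s⁻¹ - 1 := sub_pos.mpr (one_lt_inv₀ hs0 |>.mpr hs1)
  obtain ⟨k, hk, hk2⟩ := (((tendsto_rpow_atTop hexp).comp tendsto_natCast_atTop_atTop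
    |>.eventually_ge_atTop 2).and (eventually_ge_atTop 2)).exists
  refine ⟨k, hk2, ?_⟩
  have hk' : (2 : ℝ) ≤ k := by exact_mod_cast hk2
  have : (k : ℝ) ^ s⁻¹ = (k : ℝ) ^ (s⁻¹ - 1) * k := by
    rw [Real.rpow_sub_one (by positivity), div_mul_cancel₀ _ (by positivity)]
  rw [this]
  simp only [Function.comp_apply] at hk
  nlinarith

theorem exists_hausdorffMeasure_smul_eq {E : Type*} [NormedAddCommGroup E] [NormedSpace ℝ E]
    [MeasurableSpace E] [BorelSpace E] {d : ℝ} (hd : 0 < d) {S : Set E} (h0 : μH[d] S ≠ 0)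
    (htop : μH[d] S ≠ ∞) {c : ℝ≥0} (hc : c ≠ 0) :
    ∃ r : ℝ, r ≠ 0 ∧ μH[d] (r • S) = c := by
  set m := (μH[d] S).toNNReal
  have hm : (m : ℝ≥0∞) = μH[d] S := ENNReal.coe_toNNReal htop
  have hm0 : m ≠ 0 := by simpa [m, ENNReal.toNNReal_eq_zero_iff, htop] using h0
  set r : ℝ≥0 := (c / m) ^ d⁻¹
  have hr : r ≠ 0 :=
    (NNReal.rpow_pos (div_pos (pos_iff_ne_zero.mpr hc) (pos_iff_ne_zero.mpr hm0))).ne'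
  refine ⟨r, NNReal.coe_ne_zero.mpr hr, ?_⟩
  rw [Measure.hausdorffMeasure_smul₀ hd.le (NNReal.coe_ne_zero.mpr hr), ← hm, NNReal.nnnorm_eq,
    NNReal.rpow_inv_rpow hd.ne', ENNReal.smul_def, smul_eq_mul, ← ENNReal.coe_mul,
    div_mul_cancel₀ _ hm0]

/-- For every `0 < s < 1` and `0 < c < ∞` there is a compact HNUP set `K ⊆ ℝ`
with `dim_H K = s` and `H^s(K) = c`. -/
theorem stmt1 (s c : ℝ) (hs0 : 0 < s) (hs1 : s < 1) (hc : 0 < c) :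
    ∃ K : Set ℝ, IsCompact K ∧ HNUP K ∧
      dimH K = ENNReal.ofReal s ∧ μH[s] K = ENNReal.ofReal c := by
  obtain ⟨k, hk, hks⟩ := exists_nat_add_one_lt_rpow_inv hs0 hs1
  have hk0 : (0 : ℝ) < k := by positivity
  set q : ℝ := ((k : ℝ) ^ s⁻¹)⁻¹
  have hq : 0 < q := inv_pos.mpr (Real.rpow_pos_of_pos hk0 _)
  have hqk : q < ((k : ℝ) + 1)⁻¹ := inv_strictAnti₀ (by positivity) hks
  have hqs : q ^ s = (k : ℝ)⁻¹ := by
    rw [Real.inv_rpow (Real.rpow_nonneg hk0.le _), Real.rpow_inv_rpow hk0.le hs0.ne']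
  have h0 := hausdorffMeasure_crashCantor_ne_zero hk hq hqk hs0 hqs.ge
  have htop := ne_top_of_le_ne_top ENNReal.one_ne_top
    (hausdorffMeasure_crashCantor_le_one hk hq hqk hs0.le hqs.le)
  obtain ⟨r, hr, hμ⟩ := exists_hausdorffMeasure_smul_eq hs0 h0 htop (c := c.toNNReal)
    (by simpa using hc)
  refine ⟨r • crashCantor k q, (isCompact_crashCantor hk hq hqk).smul r,
    (hnup_crashCantor hk hq hqk).smul₀ hr, ?_, hμ⟩
  rw [← Real.coe_toNNReal s hs0.le] at hμ
  refine dimH_of_hausdorffMeasure_ne_zero_ne_top ?_ ?_ <;> rw [hμ]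
  exacts [by simpa using hc, ENNReal.coe_ne_top]
end

section
/- Fix an integer m ≥ 2 and a sequence ā = (a_1, a_2, …) with 0 < a_k ≤ 1/(m+1) for all k, and let I_ā be the associated Cantor-like set. If liminf_{k→∞} a_k = 0, then I_ā is hereditarily non uniformly perfect. -/
open MeasureTheory Filter Metric

/-- `A_k = a_1 ⋯ a_k` (with `A_0 = 1`). -/
noncomputable def cantorA (a : ℕ → ℝ) (k : ℕ) : ℝ := ∏ i ∈ Finset.Icc 1 k, a i

/-- The Cantor-like set
`I_ā = { Σ_{k=1}^∞ d_k (A_{k−1} − A_k)/(m−1) : each d_k ∈ {0, 1, …, m−1} }`. -/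
noncomputable def cantorLikeSet (m : ℕ) (a : ℕ → ℝ) : Set ℝ :=
  { x | ∃ d : ℕ → ℕ, (∀ k, d k < m) ∧
      x = ∑' k : ℕ, (d (k + 1) : ℝ) * (cantorA a k - cantorA a (k + 1)) / (m - 1) }

/-!
Points of `I_ā` whose digit sequences agree up to level `k + 1` are within `A_{k+1}` of each other,
while points whose digits first differ at a level `i + 1 ≤ k + 1` are separated by a gap of
level `i + 1`, of length `G_i = (A_i - m A_{i+1}) / (m - 1) ≥ G_k`. So no distance between points
of `I_ā` lies in `(A_{k+1}, G_k)`. As `G_k ≥ A_k / (m² - 1)`, the ratio `A_{k+1} / G_k` is at most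
`(m² - 1) a_{k+1}`, which is arbitrarily small for infinitely many `k`; at such a scale
`r = G_k < diam F` the annulus `c r < |y - u| < r` around a point `u` of `F ⊆ I_ā` misses `F`.
-/

lemma UniformlyPerfect.exists_pos_forall_mul_le {X : Type*} [NormedAddCommGroup X] {F : Set X}
    (hF : UniformlyPerfect F) :
    ∃ c > 0, ∀ s r : ℝ, 0 < r → r < diam F →
      (∀ x ∈ F, ∀ y ∈ F, ‖x - y‖ ≤ s ∨ r ≤ ‖x - y‖) → c * r ≤ s := by
  obtain ⟨-, ⟨u, hu, -⟩, c, hc, hann⟩ := hF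
  refine ⟨c, hc, fun s r hr hrF hgap => ?_⟩
  obtain ⟨y, hy, hcr, hlt⟩ := hann u hu r hr hrF
  rcases hgap y hy u hu with h | h <;> linarith

section Series

variable {G : Type*} [AddCommGroup G] [TopologicalSpace G] [IsTopologicalAddGroup G] [T2Space G]
  {f : ℕ → G}

lemma Summable.tsum_eq_tsum_nat_add_of_forall_lt (hf : Summable f) {k : ℕ}
    (hz : ∀ n < k, f n = 0) : ∑' n, f n = ∑' n, f (n + k) := by
  rw [← hf.sum_add_tsum_nat_add k,
    Finset.sum_eq_zero fun n hn => hz n (Finset.mem_range.mp hn), zero_add]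

lemma Summable.tsum_eq_add_tsum_nat_add_of_forall_lt (hf : Summable f) {i : ℕ}
    (hz : ∀ n < i, f n = 0) : ∑' n, f n = f i + ∑' n, f (n + (i + 1)) := by
  rw [← hf.sum_add_tsum_nat_add (i + 1), Finset.sum_range_succ,
    Finset.sum_eq_zero fun n hn => hz n (Finset.mem_range.mp hn), zero_add]

end Series

section WeightedSeries

variable {w b : ℕ → ℝ} {M : ℝ}

lemma abs_mul_le_of_abs_le (hb : ∀ n, 0 ≤ b n) (hw : ∀ n, |w n| ≤ M) (n : ℕ) :
    |w n * b n| ≤ M * b n := by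
  rw [abs_mul, abs_of_nonneg (hb n)]
  exact mul_le_mul_of_nonneg_right (hw n) (hb n)

lemma Summable.mul_of_abs_le (hbs : Summable b) (hb : ∀ n, 0 ≤ b n) (hw : ∀ n, |w n| ≤ M) :
    Summable fun n => w n * b n :=
  .of_norm_bounded (hbs.mul_left M) (abs_mul_le_of_abs_le hb hw)

lemma abs_tsum_mul_le {s : ℝ} (hbs : HasSum b s) (hb : ∀ n, 0 ≤ b n) (hw : ∀ n, |w n| ≤ M) :
    |∑' n, w n * b n| ≤ M * s := by
  rw [← Real.norm_eq_abs]
  exact tsum_of_norm_bounded (hbs.mul_left M) (abs_mul_le_of_abs_le hb hw)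

end WeightedSeries

lemma abs_natCast_sub_div_le_one {m i j : ℕ} (hm : 2 ≤ m) (hi : i < m) (hj : j < m) :
    |((i : ℝ) - j) / (m - 1)| ≤ 1 := by
  have hm1 : (0 : ℝ) < m - 1 := sub_pos.2 (Nat.one_lt_cast.2 hm)
  have hi' : (i : ℝ) + 1 ≤ m := by exact_mod_cast hi
  have hj' : (j : ℝ) + 1 ≤ m := by exact_mod_cast hj
  rw [abs_div, abs_of_pos hm1, div_le_one hm1, abs_sub_le_iff]
  constructor <;> linarith [(i.cast_nonneg : (0 : ℝ) ≤ i), (j.cast_nonneg : (0 : ℝ) ≤ j)]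

lemma cantorA_succ (a : ℕ → ℝ) (k : ℕ) : cantorA a (k + 1) = cantorA a k * a (k + 1) :=
  Finset.prod_Icc_succ_top (Nat.le_add_left 1 k) _

def IsCantorRatioSeq (m : ℕ) (a : ℕ → ℝ) : Prop :=
  ∀ k : ℕ, 1 ≤ k → 0 < a k ∧ a k ≤ 1 / (m + 1)

/-- `cantorLikeSet m a` is, by definition, the image of the digit sequences `d < m` under
`cantorPoint m a`. -/
noncomputable def cantorPoint (m : ℕ) (a : ℕ → ℝ) (d : ℕ → ℕ) : ℝ :=
  ∑' k : ℕ, (d (k + 1) : ℝ) * (cantorA a k - cantorA a (k + 1)) / (m - 1)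

/-- The `m` basic intervals of length `A_{k+1}` inside one of length `A_k` are separated by
`m - 1` gaps of this common length. -/
noncomputable def cantorGap (m : ℕ) (a : ℕ → ℝ) (k : ℕ) : ℝ :=
  (cantorA a k - m * cantorA a (k + 1)) / (m - 1)

namespace IsCantorRatioSeq

variable {m : ℕ} {a : ℕ → ℝ}

lemma cantorA_pos (ha : IsCantorRatioSeq m a) (k : ℕ) : 0 < cantorA a k :=
  Finset.prod_pos fun i hi => (ha i (Finset.mem_Icc.mp hi).1).1

lemma mul_cantorA_succ_le (ha : IsCantorRatioSeq m a) (k : ℕ) :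
    (m + 1) * cantorA a (k + 1) ≤ cantorA a k := by
  have hak : (m + 1) * a (k + 1) ≤ 1 := by
    have := (ha (k + 1) k.succ_pos).2
    rwa [le_div_iff₀ (by positivity), mul_comm] at this
  rw [cantorA_succ]
  nlinarith [ha.cantorA_pos k]

lemma cantorA_antitone (ha : IsCantorRatioSeq m a) : Antitone (cantorA a) :=
  antitone_nat_of_succ_le fun k => by
    nlinarith [ha.mul_cantorA_succ_le k, ha.cantorA_pos (k + 1), (m.cast_nonneg : (0 : ℝ) ≤ m)]

lemma tendsto_cantorA (ha : IsCantorRatioSeq m a) (hm : 0 < m) :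
    Tendsto (cantorA a) atTop (nhds 0) := by
  have hr : (0 : ℝ) ≤ ((m : ℝ) + 1)⁻¹ := by positivity
  have hr1 : ((m : ℝ) + 1)⁻¹ < 1 := inv_lt_one_of_one_lt₀ (by simp [hm])
  refine squeeze_zero (fun k => (ha.cantorA_pos k).le) (fun k => le_geom hr k fun j _ => ?_)
    (by simpa [cantorA] using (tendsto_pow_atTop_nhds_zero_of_lt_one hr hr1).mul_const (cantorA a 0))
  rw [inv_mul_eq_div, le_div_iff₀ (by positivity), mul_comm]
  exact ha.mul_cantorA_succ_le j

lemma hasSum_cantorA_sub (ha : IsCantorRatioSeq m a) (hm : 0 < m) (k : ℕ) :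
    HasSum (fun n => cantorA a (n + k) - cantorA a (n + k + 1)) (cantorA a k) := by
  rw [hasSum_iff_tendsto_nat_of_nonneg fun n => sub_nonneg.2 (ha.cantorA_antitone (n + k).le_succ)]
  have hsum : ∀ n, ∑ i ∈ Finset.range n, (cantorA a (i + k) - cantorA a (i + k + 1))
      = cantorA a k - cantorA a (n + k) := fun n => by
    simpa [Nat.add_right_comm] using Finset.sum_range_sub' (fun i => cantorA a (i + k)) n
  simp only [hsum]
  simpa using tendsto_const_nhds.sub ((ha.tendsto_cantorA hm).comp (tendsto_add_atTop_nat k))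

lemma exists_cantorA_lt_and_lt (ha : IsCantorRatioSeq m a) (hm : 0 < m)
    (hlim : liminf a atTop = 0) {δ ε : ℝ} (hδ : 0 < δ) (hε : 0 < ε) :
    ∃ k, cantorA a k < δ ∧ a (k + 1) < ε := by
  have hbdd : IsBoundedUnder (· ≤ ·) atTop fun k => a (k + 1) :=
    isBoundedUnder_of ⟨_, fun k => (ha (k + 1) k.succ_pos).2⟩
  have hsmall : ∃ᶠ k in atTop, a (k + 1) < ε :=
    frequently_lt_of_liminf_lt hbdd.isCoboundedUnder_ge (by rwa [liminf_nat_add a 1, hlim])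
  obtain ⟨k, hak, hAk⟩ :=
    (hsmall.and_eventually ((ha.tendsto_cantorA hm).eventually_lt_const hδ)).exists
  exact ⟨k, hAk, hak⟩

lemma cantorA_sub_nonneg (ha : IsCantorRatioSeq m a) (n : ℕ) :
    0 ≤ cantorA a n - cantorA a (n + 1) :=
  sub_nonneg.2 (ha.cantorA_antitone n.le_succ)

lemma summable_cantorA_sub (ha : IsCantorRatioSeq m a) (hm : 0 < m) :
    Summable fun n => cantorA a n - cantorA a (n + 1) := by
  simpa using (ha.hasSum_cantorA_sub hm 0).summable

lemma cantorPoint_sub (ha : IsCantorRatioSeq m a) (hm : 2 ≤ m) {d e : ℕ → ℕ}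
    (hd : ∀ k, d k < m) (he : ∀ k, e k < m) :
    cantorPoint m a d - cantorPoint m a e =
      ∑' n, ((d (n + 1) : ℝ) - e (n + 1)) / (m - 1) * (cantorA a n - cantorA a (n + 1)) := by
  have hsummable : ∀ {d : ℕ → ℕ}, (∀ k, d k < m) →
      Summable fun n => (d (n + 1) : ℝ) * (cantorA a n - cantorA a (n + 1)) / (m - 1) :=
    fun hd => by
      simpa [div_mul_eq_mul_div] using (ha.summable_cantorA_sub (by omega)).mul_of_abs_le
        ha.cantorA_sub_nonneg fun n => abs_natCast_sub_div_le_one hm (hd (n + 1)) (by omega : 0 < m)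
  rw [cantorPoint, cantorPoint, ← (hsummable hd).tsum_sub (hsummable he)]
  exact tsum_congr fun n => by ring

lemma abs_cantorPoint_sub_le (ha : IsCantorRatioSeq m a) (hm : 2 ≤ m) {d e : ℕ → ℕ}
    (hd : ∀ k, d k < m) (he : ∀ k, e k < m) {k : ℕ} (hagree : ∀ n < k, d (n + 1) = e (n + 1)) :
    |cantorPoint m a d - cantorPoint m a e| ≤ cantorA a k := by
  have hw n := abs_natCast_sub_div_le_one hm (hd (n + 1)) (he (n + 1))
  rw [ha.cantorPoint_sub hm hd he, ((ha.summable_cantorA_sub (by omega)).mul_of_abs_le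
    ha.cantorA_sub_nonneg hw).tsum_eq_tsum_nat_add_of_forall_lt (k := k)
      fun n hn => by simp [hagree n hn]]
  simpa using abs_tsum_mul_le (ha.hasSum_cantorA_sub (by omega) k)
    (fun n => ha.cantorA_sub_nonneg (n + k)) fun n => hw (n + k)

lemma cantorGap_le_cantorPoint_sub (ha : IsCantorRatioSeq m a) (hm : 2 ≤ m) {d e : ℕ → ℕ}
    (hd : ∀ k, d k < m) (he : ∀ k, e k < m) {i : ℕ} (hagree : ∀ n < i, d (n + 1) = e (n + 1))
    (hlt : e (i + 1) < d (i + 1)) :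
    cantorGap m a i ≤ cantorPoint m a d - cantorPoint m a e := by
  have hm1 : (0 : ℝ) < m - 1 := sub_pos.2 (Nat.one_lt_cast.2 hm)
  have hw n := abs_natCast_sub_div_le_one hm (hd (n + 1)) (he (n + 1))
  rw [ha.cantorPoint_sub hm hd he, ((ha.summable_cantorA_sub (by omega)).mul_of_abs_le
    ha.cantorA_sub_nonneg hw).tsum_eq_add_tsum_nat_add_of_forall_lt (i := i)
      fun n hn => by simp [hagree n hn]]
  have htail := abs_tsum_mul_le (ha.hasSum_cantorA_sub (by omega) (i + 1))
    (fun n => ha.cantorA_sub_nonneg (n + (i + 1))) fun n => hw (n + (i + 1))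
  have hdigit : (1 : ℝ) ≤ (d (i + 1) : ℝ) - e (i + 1) := by
    have : (e (i + 1) : ℝ) + 1 ≤ d (i + 1) := by exact_mod_cast hlt
    linarith
  have hhead : (cantorA a i - cantorA a (i + 1)) / (m - 1) ≤
      ((d (i + 1) : ℝ) - e (i + 1)) / (m - 1) * (cantorA a i - cantorA a (i + 1)) := by
    rw [div_mul_eq_mul_div]
    gcongr
    nlinarith [ha.cantorA_sub_nonneg i]
  have hgap : cantorGap m a i = (cantorA a i - cantorA a (i + 1)) / (m - 1) - cantorA a (i + 1) := by
    rw [cantorGap]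
    field_simp
    ring
  rw [hgap]
  linarith [(abs_le.mp htail).1]

lemma cantorA_le_mul_cantorGap (ha : IsCantorRatioSeq m a) (hm : 2 ≤ m) (k : ℕ) :
    cantorA a k ≤ ((m : ℝ) ^ 2 - 1) * cantorGap m a k := by
  have hm1 : (0 : ℝ) < m - 1 := sub_pos.2 (Nat.one_lt_cast.2 hm)
  rw [cantorGap, show (m : ℝ) ^ 2 - 1 = (m + 1) * (m - 1) by ring, mul_assoc,
    mul_div_cancel₀ _ hm1.ne']
  nlinarith [mul_le_mul_of_nonneg_left (ha.mul_cantorA_succ_le k) (m.cast_nonneg : (0 : ℝ) ≤ m)]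

lemma cantorGap_le_cantorA (ha : IsCantorRatioSeq m a) (hm : 2 ≤ m) (k : ℕ) :
    cantorGap m a k ≤ cantorA a k := by
  have hm1 : (1 : ℝ) ≤ m - 1 := by
    have : (2 : ℝ) ≤ m := by exact_mod_cast hm
    linarith
  rw [cantorGap, div_le_iff₀ (by linarith)]
  nlinarith [ha.cantorA_pos k, ha.cantorA_pos (k + 1)]

lemma cantorGap_antitone (ha : IsCantorRatioSeq m a) (hm : 2 ≤ m) : Antitone (cantorGap m a) :=
  antitone_nat_of_succ_le fun k => by
    refine div_le_div_of_nonneg_right ?_ (sub_nonneg.2 (Nat.one_le_cast.2 (by omega)))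
    nlinarith [ha.mul_cantorA_succ_le k, ha.cantorA_pos (k + 2), (m.cast_nonneg : (0 : ℝ) ≤ m)]

lemma abs_sub_le_or_cantorGap_le (ha : IsCantorRatioSeq m a) (hm : 2 ≤ m) {x y : ℝ}
    (hx : x ∈ cantorLikeSet m a) (hy : y ∈ cantorLikeSet m a) (k : ℕ) :
    |x - y| ≤ cantorA a (k + 1) ∨ cantorGap m a k ≤ |x - y| := by
  obtain ⟨d, hd, rfl⟩ := hx
  obtain ⟨e, he, rfl⟩ := hy
  by_cases hagree : ∀ n < k + 1, d (n + 1) = e (n + 1)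
  · exact Or.inl (ha.abs_cantorPoint_sub_le hm hd he hagree)
  right
  classical
  have hdiff : ∃ n, d (n + 1) ≠ e (n + 1) := by
    simp only [not_forall] at hagree
    obtain ⟨n, -, hn⟩ := hagree
    exact ⟨n, hn⟩
  have hbefore n (hn : n < Nat.find hdiff) : d (n + 1) = e (n + 1) :=
    not_not.1 (Nat.find_min hdiff hn)
  have hik : Nat.find hdiff ≤ k := by
    by_contra! hki
    exact hagree fun n hn => hbefore n (by omega)
  refine (ha.cantorGap_antitone hm hik).trans ?_
  rcases (Nat.find_spec hdiff).lt_or_gt with hlt | hlt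
  · rw [abs_sub_comm]
    exact (ha.cantorGap_le_cantorPoint_sub hm he hd (fun n hn => (hbefore n hn).symm) hlt).trans
      (le_abs_self _)
  · exact (ha.cantorGap_le_cantorPoint_sub hm hd he hbefore hlt).trans (le_abs_self _)

end IsCantorRatioSeq

/-- If `liminf a_k = 0`, the Cantor-like set `I_ā` is HNUP. -/
theorem stmt4 (m : ℕ) (hm : 2 ≤ m) (a : ℕ → ℝ)
    (ha : ∀ k : ℕ, 1 ≤ k → 0 < a k ∧ a k ≤ 1 / (m + 1))
    (hlim : Filter.liminf a Filter.atTop = 0) :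
    HNUP (cantorLikeSet m a) := by
  replace ha : IsCantorRatioSeq m a := ha
  intro F hFI hF
  obtain ⟨c, hc, hmul_le⟩ := hF.exists_pos_forall_mul_le
  have hm1 : (0 : ℝ) < (m : ℝ) ^ 2 - 1 := by
    have : (1 : ℝ) < m := Nat.one_lt_cast.2 hm
    nlinarith
  obtain ⟨k, hAk, hak⟩ := ha.exists_cantorA_lt_and_lt (by omega) hlim
    (diam_pos hF.2.1 hF.1.isBounded) (div_pos hc hm1)
  rw [lt_div_iff₀ hm1, mul_comm] at hak
  have hgap := ha.cantorA_le_mul_cantorGap hm k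
  have hgap_pos : 0 < cantorGap m a k := by nlinarith [ha.cantorA_pos k]
  have hc_le := hmul_le (cantorA a (k + 1)) (cantorGap m a k) hgap_pos
    ((ha.cantorGap_le_cantorA hm k).trans_lt hAk) fun x hx y hy => by
      simpa only [Real.norm_eq_abs] using ha.abs_sub_le_or_cantorGap_le hm (hFI hx) (hFI hy) k
  have ha_pos := (ha (k + 1) k.succ_pos).1
  refine lt_irrefl (c * cantorGap m a k) ?_
  calc
    _ ≤ cantorA a k * a (k + 1) := cantorA_succ a k ▸ hc_le
    _ ≤ ((m : ℝ) ^ 2 - 1) * cantorGap m a k * a (k + 1) := by gcongr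
    _ = ((m : ℝ) ^ 2 - 1) * a (k + 1) * cantorGap m a k := by ring
    _ < c * cantorGap m a k := by gcongr
end

section
/- Fix an integer m ≥ 2 and a sequence ā = (a_1, a_2, …) with 0 < a_k ≤ 1/(m+1) for all k, and let I_ā be the associated Cantor-like set. If liminf_{k→∞} a_k > 0, then I_ā is uniformly perfect. -/
open MeasureTheory Filter Metric

/-!
Write a point of `I_ā` as `x = Σ d_k (A_{k-1} - A_k)/(m-1)`. Given a scale `r ≤ 1 = A_0`, pick the
generation `K` with `A_K < r ≤ A_{K-1}`, and move the digit `d_{K+1}` by one. This produces a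
point `y ∈ I_ā` with `|y - x| = (A_K - A_{K+1})/(m-1)`, which is `< A_K < r`; on the other hand
`A_K - A_{K+1} ≥ (1 - q) A_K` when `a_k ≤ q < 1`, and `A_K = A_{K-1} a_K ≥ δ r` when `a_k ≥ δ`.
Hence `|y - x| > δ (1 - q) r / m`.
-/

lemma exists_pos_forall_le_of_liminf_pos {u : ℕ → ℝ} (hpos : ∀ i, 0 < u i)
    (h : 0 < liminf u atTop) : ∃ δ > 0, ∀ i, δ ≤ u i := by
  have key : ∀ N, ∀ ε > 0, (∀ i, N ≤ i → ε ≤ u i) → ∃ δ > 0, ∀ i, δ ≤ u i := by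
    intro N
    induction N with
    | zero => exact fun ε hε hN => ⟨ε, hε, fun i => hN i i.zero_le⟩
    | succ N ih =>
      refine fun ε hε hN => ih (min ε (u N)) (lt_min hε (hpos N)) fun i hi => ?_
      rcases hi.eq_or_lt with rfl | hi
      · exact min_le_right _ _
      · exact (min_le_left _ _).trans (hN i hi)
  have hbdd : IsBoundedUnder (· ≥ ·) atTop u := isBoundedUnder_of ⟨0, fun i => (hpos i).le⟩
  obtain ⟨N, hN⟩ := eventually_atTop.mp (eventually_lt_of_lt_liminf (half_lt_self h) hbdd)
  exact key N _ (half_pos h) fun i hi => (hN i hi).le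

lemma exists_succ_lt_le {f : ℕ → ℝ} {r : ℝ} (h0 : r ≤ f 0) (h : ∃ n, f n < r) :
    ∃ j, f (j + 1) < r ∧ r ≤ f j := by
  obtain ⟨n, hn⟩ := h
  induction n with
  | zero => exact absurd h0 hn.not_ge
  | succ n ih => exact if hr : r ≤ f n then ⟨n, hn, hr⟩ else ih (not_le.mp hr)

lemma natCast_mul_div_mem_Icc {n m : ℕ} (hn : n < m) {g : ℝ} (hg : 0 ≤ g) :
    (n : ℝ) * g / (m - 1) ∈ Set.Icc 0 g := by
  rcases Nat.eq_zero_or_pos n with rfl | hn0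
  · simpa using hg
  have hnm : (n : ℝ) ≤ m - 1 := by
    have : ((n + 1 : ℕ) : ℝ) ≤ m := by exact_mod_cast hn
    push_cast at this
    linarith
  have hm1 : (0 : ℝ) < m - 1 := (Nat.cast_pos.mpr hn0).trans_le hnm
  exact ⟨by positivity, (div_le_iff₀ hm1).mpr (by nlinarith)⟩

lemma exists_lt_abs_sub_eq_one {n m : ℕ} (hm : 2 ≤ m) (hn : n < m) :
    ∃ v < m, |(v : ℝ) - n| = 1 := by
  rcases Nat.eq_zero_or_pos n with rfl | hn0
  · exact ⟨1, by omega, by norm_num⟩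
  · exact ⟨n - 1, by omega, by rw [Nat.cast_sub hn0]; norm_num⟩

lemma forall_update_lt {m : ℕ} {d : ℕ → ℕ} (hd : ∀ k, d k < m) (i : ℕ) {v : ℕ} (hv : v < m) :
    ∀ k, Function.update d i v k < m :=
  Function.forall_update_iff d (p := fun _ n => n < m) |>.mpr ⟨hv, fun k _ => hd k⟩

lemma cantorA_zero (a : ℕ → ℝ) : cantorA a 0 = 1 := by
  simp [cantorA]

section Sequence

variable {a : ℕ → ℝ} {q : ℝ}

lemma cantorA_pos (hpos : ∀ k, 1 ≤ k → 0 < a k) (k : ℕ) : 0 < cantorA a k :=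
  Finset.prod_pos fun i hi => hpos i (Finset.mem_Icc.mp hi).1

variable (hpos : ∀ k, 1 ≤ k → 0 < a k) (hq : ∀ k, 1 ≤ k → a k ≤ q)
include hpos hq

lemma one_sub_mul_cantorA_le (k : ℕ) :
    (1 - q) * cantorA a k ≤ cantorA a k - cantorA a (k + 1) := by
  have := mul_le_mul_of_nonneg_left (hq (k + 1) (Nat.le_add_left 1 k)) (cantorA_pos hpos k).le
  rw [cantorA_succ]
  linarith

lemma cantorA_le_pow (k : ℕ) : cantorA a k ≤ q ^ k := by
  have hq0 : 0 ≤ q := (hpos 1 le_rfl).le.trans (hq 1 le_rfl)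
  induction k with
  | zero => simp [cantorA_zero]
  | succ k ih =>
    rw [cantorA_succ, pow_succ]
    exact mul_le_mul ih (hq _ (Nat.le_add_left 1 k)) (hpos _ (Nat.le_add_left 1 k)).le
      (pow_nonneg hq0 k)

variable (hq1 : q < 1)
include hq1

lemma tendsto_cantorA : Tendsto (cantorA a) atTop (nhds 0) :=
  squeeze_zero (fun k => (cantorA_pos hpos k).le) (cantorA_le_pow hpos hq)
    (tendsto_pow_atTop_nhds_zero_of_lt_one ((hpos 1 le_rfl).le.trans (hq 1 le_rfl)) hq1)

lemma cantorA_sub_succ_nonneg (k : ℕ) : 0 ≤ cantorA a k - cantorA a (k + 1) :=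
  (mul_nonneg (sub_nonneg.mpr hq1.le) (cantorA_pos hpos k).le).trans
    (one_sub_mul_cantorA_le hpos hq k)

lemma hasSum_cantorA_sub : HasSum (fun k => cantorA a k - cantorA a (k + 1)) 1 := by
  rw [hasSum_iff_tendsto_nat_of_nonneg (cantorA_sub_succ_nonneg hpos hq hq1)]
  simp only [Finset.sum_range_sub', cantorA_zero]
  simpa using tendsto_const_nhds.sub (tendsto_cantorA hpos hq hq1)

end Sequence

noncomputable def cantorDigitTerm (m : ℕ) (a : ℕ → ℝ) (d : ℕ → ℕ) (k : ℕ) : ℝ :=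
  (d (k + 1) : ℝ) * (cantorA a k - cantorA a (k + 1)) / (m - 1)

lemma mem_cantorLikeSet_iff {m : ℕ} {a : ℕ → ℝ} {x : ℝ} :
    x ∈ cantorLikeSet m a ↔ ∃ d : ℕ → ℕ, (∀ k, d k < m) ∧ x = ∑' k, cantorDigitTerm m a d k :=
  Iff.rfl

lemma zero_mem_cantorLikeSet {m : ℕ} (hm : 0 < m) (a : ℕ → ℝ) : (0 : ℝ) ∈ cantorLikeSet m a :=
  ⟨fun _ => 0, fun _ => hm, by simp⟩

section Digits

variable {m : ℕ} {a : ℕ → ℝ} {q : ℝ}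
  (hpos : ∀ k, 1 ≤ k → 0 < a k) (hq : ∀ k, 1 ≤ k → a k ≤ q) (hq1 : q < 1)
include hpos hq hq1

lemma cantorDigitTerm_mem_Icc {d : ℕ → ℕ} (hd : ∀ k, d k < m) (k : ℕ) :
    cantorDigitTerm m a d k ∈ Set.Icc 0 (cantorA a k - cantorA a (k + 1)) :=
  natCast_mul_div_mem_Icc (hd (k + 1)) (cantorA_sub_succ_nonneg hpos hq hq1 k)

lemma norm_cantorDigitTerm_le {d : ℕ → ℕ} (hd : ∀ k, d k < m) (k : ℕ) :
    ‖cantorDigitTerm m a d k‖ ≤ cantorA a k - cantorA a (k + 1) := by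
  obtain ⟨h0, h1⟩ := cantorDigitTerm_mem_Icc hpos hq hq1 hd k
  rwa [Real.norm_of_nonneg h0]

lemma summable_cantorDigitTerm {d : ℕ → ℕ} (hd : ∀ k, d k < m) :
    Summable (cantorDigitTerm m a d) :=
  (hasSum_cantorA_sub hpos hq hq1).summable.of_norm_bounded
    (norm_cantorDigitTerm_le hpos hq hq1 hd)

lemma cantorLikeSet_subset_Icc : cantorLikeSet m a ⊆ Set.Icc 0 1 := by
  rintro x ⟨d, hd, rfl⟩
  refine ⟨tsum_nonneg fun k => (cantorDigitTerm_mem_Icc hpos hq hq1 hd k).1, ?_⟩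
  calc ∑' k, cantorDigitTerm m a d k ≤ ∑' k, (cantorA a k - cantorA a (k + 1)) :=
        (summable_cantorDigitTerm hpos hq hq1 hd).tsum_le_tsum
          (fun k => (cantorDigitTerm_mem_Icc hpos hq hq1 hd k).2)
          (hasSum_cantorA_sub hpos hq hq1).summable
    _ = 1 := (hasSum_cantorA_sub hpos hq hq1).tsum_eq

lemma diam_cantorLikeSet_le_one : diam (cantorLikeSet m a) ≤ 1 := by
  calc diam (cantorLikeSet m a) ≤ diam (Set.Icc (0 : ℝ) 1) :=
        diam_mono (cantorLikeSet_subset_Icc hpos hq hq1) (isBounded_Icc 0 1)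
    _ = 1 := by simp [Real.diam_Icc]

lemma isCompact_cantorLikeSet : IsCompact (cantorLikeSet m a) := by
  have hrange : cantorLikeSet m a =
      Set.range fun e : ℕ → Fin m => ∑' k, cantorDigitTerm m a (fun i => e i) k := by
    ext x
    constructor
    · rintro ⟨d, hd, rfl⟩
      exact ⟨fun i => ⟨d i, hd i⟩, rfl⟩
    · rintro ⟨e, rfl⟩
      exact ⟨fun i => e i, fun i => (e i).isLt, rfl⟩
  rw [hrange]
  refine isCompact_range (continuous_tsum (fun k => ?_) (hasSum_cantorA_sub hpos hq hq1).summable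
    fun k e => norm_cantorDigitTerm_le hpos hq hq1 (fun i => (e i).isLt) k)
  have he : Continuous fun e : ℕ → Fin m => ((e (k + 1) : ℕ) : ℝ) :=
    (continuous_of_discreteTopology (f := fun i : Fin m => ((i : ℕ) : ℝ))).comp
      (continuous_apply (k + 1))
  exact (he.mul continuous_const).div_const _

lemma tsum_cantorDigitTerm_update_sub {d : ℕ → ℕ} (hd : ∀ k, d k < m) (K : ℕ) {v : ℕ}
    (hv : v < m) :
    ∑' k, cantorDigitTerm m a (Function.update d (K + 1) v) k - ∑' k, cantorDigitTerm m a d k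
      = ((v : ℝ) - d (K + 1)) * (cantorA a K - cantorA a (K + 1)) / (m - 1) := by
  rw [← (summable_cantorDigitTerm hpos hq hq1 (forall_update_lt hd (K + 1) hv)).tsum_sub
    (summable_cantorDigitTerm hpos hq hq1 hd), tsum_eq_single K]
  · simp only [cantorDigitTerm, Function.update_self]
    ring
  · intro k hk
    simp [cantorDigitTerm, Function.update_of_ne (show k + 1 ≠ K + 1 by omega)]

variable (hm : 2 ≤ m)
include hm

lemma one_mem_cantorLikeSet : (1 : ℝ) ∈ cantorLikeSet m a := by
  refine ⟨fun _ => m - 1, fun _ => show m - 1 < m by omega, ?_⟩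
  have hm1 : (m : ℝ) - 1 ≠ 0 := by
    have : (2 : ℝ) ≤ m := by exact_mod_cast hm
    linarith
  have hcast : ((m - 1 : ℕ) : ℝ) = m - 1 := by rw [Nat.cast_sub (by omega)]; simp
  simp only [hcast, mul_div_cancel_left₀ _ hm1]
  exact (hasSum_cantorA_sub hpos hq hq1).tsum_eq.symm

lemma exists_mem_cantorLikeSet_abs_sub_eq {x : ℝ} (hx : x ∈ cantorLikeSet m a) (K : ℕ) :
    ∃ y ∈ cantorLikeSet m a, |y - x| = (cantorA a K - cantorA a (K + 1)) / (m - 1) := by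
  obtain ⟨d, hd, rfl⟩ := mem_cantorLikeSet_iff.mp hx
  obtain ⟨v, hv, hvd⟩ := exists_lt_abs_sub_eq_one hm (hd (K + 1))
  refine ⟨∑' k, cantorDigitTerm m a (Function.update d (K + 1) v) k,
    ⟨Function.update d (K + 1) v, forall_update_lt hd (K + 1) hv, rfl⟩, ?_⟩
  have hm1 : (0 : ℝ) ≤ m - 1 := by
    have : (2 : ℝ) ≤ m := by exact_mod_cast hm
    linarith
  rw [tsum_cantorDigitTerm_update_sub hpos hq hq1 hd K hv, mul_div_assoc, abs_mul, hvd, one_mul,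
    abs_of_nonneg (div_nonneg (cantorA_sub_succ_nonneg hpos hq hq1 K) hm1)]

end Digits

theorem uniformlyPerfect_cantorLikeSet {m : ℕ} (hm : 2 ≤ m) {a : ℕ → ℝ} {δ q : ℝ} (hδ : 0 < δ)
    (hδa : ∀ k, 1 ≤ k → δ ≤ a k) (hq : ∀ k, 1 ≤ k → a k ≤ q) (hq1 : q < 1) :
    UniformlyPerfect (cantorLikeSet m a) := by
  have hpos k (hk : 1 ≤ k) : 0 < a k := hδ.trans_le (hδa k hk)
  have hm1 : (1 : ℝ) ≤ m - 1 := by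
    have : (2 : ℝ) ≤ m := by exact_mod_cast hm
    linarith
  refine ⟨isCompact_cantorLikeSet hpos hq hq1,
    ⟨0, zero_mem_cantorLikeSet (by omega) a, 1, one_mem_cantorLikeSet hpos hq hq1 hm, zero_ne_one⟩,
    δ * (1 - q) / m, by have := sub_pos.mpr hq1; positivity, fun x hx r hr hrd => ?_⟩
  have hr1 : r ≤ cantorA a 0 :=
    cantorA_zero a ▸ (hrd.trans_le (diam_cantorLikeSet_le_one hpos hq hq1)).le
  obtain ⟨j, hjr, hrj⟩ := exists_succ_lt_le hr1
    ((tendsto_cantorA hpos hq hq1).eventually (gt_mem_nhds hr)).exists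
  obtain ⟨y, hy, hxy⟩ := exists_mem_cantorLikeSet_abs_sub_eq hpos hq hq1 hm hx (j + 1)
  have hgap := one_sub_mul_cantorA_le hpos hq (j + 1)
  have hA := cantorA_pos hpos (j + 1 + 1)
  refine ⟨y, hy, ?_, ?_⟩ <;> rw [Real.norm_eq_abs, hxy]
  · have hδr : δ * r ≤ cantorA a (j + 1) := by
      rw [cantorA_succ, mul_comm]
      exact mul_le_mul hrj (hδa _ (Nat.le_add_left 1 j)) hδ.le (cantorA_pos hpos j).le
    have := sub_pos.mpr hq1
    calc δ * (1 - q) / m * r = (1 - q) * (δ * r) / m := by ring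
      _ ≤ (1 - q) * cantorA a (j + 1) / m := by gcongr
      _ < (1 - q) * cantorA a (j + 1) / (m - 1) := by
          have := cantorA_pos hpos (j + 1)
          gcongr
          linarith
      _ ≤ _ := by gcongr
  · calc _ ≤ cantorA a (j + 1) - cantorA a (j + 1 + 1) :=
          div_le_self (cantorA_sub_succ_nonneg hpos hq hq1 _) hm1
      _ < r := by linarith

/-- If `liminf a_k > 0`, the Cantor-like set `I_ā` is uniformly perfect. -/
theorem stmt5 (m : ℕ) (hm : 2 ≤ m) (a : ℕ → ℝ)
    (ha : ∀ k : ℕ, 1 ≤ k → 0 < a k ∧ a k ≤ 1 / (m + 1))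
    (hlim : 0 < Filter.liminf a Filter.atTop) :
    UniformlyPerfect (cantorLikeSet m a) := by
  obtain ⟨δ, hδ, hδa⟩ := exists_pos_forall_le_of_liminf_pos (u := fun i => a (i + 1))
    (fun i => (ha (i + 1) (Nat.le_add_left 1 i)).1) (by rwa [liminf_nat_add])
  refine uniformlyPerfect_cantorLikeSet hm hδ (fun k hk => ?_) (fun k hk => (ha k hk).2)
    (by rw [div_lt_one (by positivity)]; norm_num; omega)
  simpa [Nat.sub_add_cancel hk] using hδa (k - 1)
end

section
/- Let C(0, t) = {z ∈ ℂ : |z| = t} and let E be the closure of ⋃_{n=1}^∞ C(0, 1/n), i.e., E = {0} ∪ ⋃_{n=1}^∞ C(0, 1/n). Then E is a compact set with m_2(E) = 0 which is not porous. -/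
open MeasureTheory Filter Metric

/-- A set `E ⊆ ℂ` is porous if there exists `c > 0` such that for every `a ∈ E` and
every `r > 0` there is a ball `B(b, c·r) ⊆ B(a, r)` disjoint from `E`. -/
def Porous (E : Set ℂ) : Prop :=
  ∃ c : ℝ, 0 < c ∧ ∀ a ∈ E, ∀ r : ℝ, 0 < r →
    ∃ b : ℂ, Metric.ball b (c * r) ⊆ Metric.ball a r ∧ Metric.ball b (c * r) ∩ E = ∅

/-!
`E` is the preimage under the norm of the compact countable set `{0} ∪ {1/n}`, so it is compact
and a countable union of Haar-null spheres. It is not porous because the circles accumulate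
quadratically: a point of norm `x ∈ (0, 1]` lies within `2x²` of `E`, whereas porosity at a point
of `E` of norm `r` would produce an `E`-free ball of radius `c·r` around a point of norm `< 2r`.
-/

open Topology

def harmonicRadii : Set ℝ := Set.range fun n : ℕ => 1 / ((n : ℝ) + 1)

lemma one_div_mem_harmonicRadii {n : ℕ} (hn : 1 ≤ n) : 1 / (n : ℝ) ∈ harmonicRadii :=
  ⟨n - 1, by simp only [Nat.cast_pred hn, sub_add_cancel]⟩

lemma isCompact_insert_zero_harmonicRadii : IsCompact (insert 0 harmonicRadii) :=
  tendsto_one_div_add_atTop_nhds_zero_nat.isCompact_insert_range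

lemma exists_mem_harmonicRadii_abs_sub_lt {x : ℝ} (hx₀ : 0 < x) (hx₁ : x ≤ 1) :
    ∃ t ∈ harmonicRadii, |t - x| < 2 * x ^ 2 := by
  set k := ⌊1 / x⌋₊
  have hk_le : (k : ℝ) ≤ 1 / x := Nat.floor_le (by positivity)
  have hk_lt : 1 / x < k + 1 := Nat.lt_floor_add_one _
  have hk : 1 ≤ k := Nat.le_floor (by rw [Nat.cast_one, le_div_iff₀ hx₀]; linarith)
  have hk₀ : (1 : ℝ) ≤ k := by exact_mod_cast hk
  refine ⟨1 / k, one_div_mem_harmonicRadii hk, ?_⟩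
  have hx_le : x ≤ 1 / k := by
    rw [le_div_iff₀ hx₀] at hk_le
    rw [le_div_iff₀ (by positivity)]
    linarith
  have hx_gt : 1 / (k + 1) < x := by
    rw [div_lt_iff₀ hx₀] at hk_lt
    rw [div_lt_iff₀ (by positivity)]
    linarith
  rw [abs_of_nonneg (sub_nonneg.mpr hx_le)]
  calc 1 / k - x < 1 / k - 1 / (k + 1) := by linarith
    _ = 1 / (k * (k + 1)) := by field_simp; ring
    _ ≤ 2 * (1 / (k + 1)) ^ 2 := by
        rw [div_pow, one_pow, mul_one_div, div_le_div_iff₀ (by positivity) (by positivity)]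
        nlinarith
    _ < 2 * x ^ 2 := by gcongr

lemma iUnion_sphere_one_div_eq_preimage_norm {V : Type*} [SeminormedAddCommGroup V] :
    ⋃ (n : ℕ) (_ : 1 ≤ n), sphere (0 : V) (1 / n) = norm ⁻¹' harmonicRadii := by
  ext z
  simp only [Set.mem_iUnion, mem_sphere_zero_iff_norm, Set.mem_preimage]
  constructor
  · rintro ⟨n, hn, hz⟩
    exact hz ▸ one_div_mem_harmonicRadii hn
  · rintro ⟨n, hz⟩
    exact ⟨n + 1, Nat.le_add_left 1 n, by rw [← hz]; push_cast; rfl⟩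

lemma preimage_norm_insert_zero {V : Type*} [NormedAddCommGroup V] (A : Set ℝ) :
    norm ⁻¹' insert 0 A = insert (0 : V) (norm ⁻¹' A) := by
  ext z
  simp

lemma isCompact_preimage_norm {V : Type*} [SeminormedAddCommGroup V] [ProperSpace V]
    {K : Set ℝ} (hK : IsCompact K) :
    IsCompact (norm ⁻¹' K : Set V) := by
  obtain ⟨R, hR⟩ := hK.isBounded.subset_closedBall 0
  refine isCompact_of_isClosed_isBounded (hK.isClosed.preimage continuous_norm)
    ((isBounded_closedBall (x := 0) (r := R)).subset fun z hz => ?_)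
  simpa using hR hz

section NormPreimage

variable {V : Type*} [NormedAddCommGroup V] [NormedSpace ℝ V]

lemma exists_norm_eq_dist_eq {b : V} (hb : b ≠ 0) {t : ℝ} (ht : 0 ≤ t) :
    ∃ p : V, ‖p‖ = t ∧ dist p b = |t - ‖b‖| := by
  have hb' : 0 < ‖b‖ := norm_pos_iff.mpr hb
  refine ⟨(t / ‖b‖) • b, ?_, ?_⟩
  · rw [norm_smul, Real.norm_of_nonneg (by positivity), div_mul_cancel₀ _ hb'.ne']
  · rw [dist_eq_norm, show (t / ‖b‖) • b - b = (t / ‖b‖ - 1) • b by rw [sub_smul, one_smul],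
      norm_smul, Real.norm_eq_abs, ← abs_of_pos hb', ← abs_mul, abs_of_pos hb', sub_mul,
      div_mul_cancel₀ _ hb'.ne', one_mul]

lemma closure_preimage_norm_harmonicRadii [Nontrivial V] :
    closure (norm ⁻¹' harmonicRadii : Set V) = norm ⁻¹' insert 0 harmonicRadii := by
  refine (closure_minimal (Set.preimage_mono (Set.subset_insert _ _))
    (isCompact_insert_zero_harmonicRadii.isClosed.preimage continuous_norm)).antisymm ?_
  rw [preimage_norm_insert_zero, Set.insert_subset_iff]
  refine ⟨?_, subset_closure⟩
  obtain ⟨v, hv⟩ := exists_norm_eq V zero_le_one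
  have hlim : Tendsto (fun n : ℕ => (1 / ((n : ℝ) + 1)) • v) atTop (𝓝 0) := by
    simpa using tendsto_one_div_add_atTop_nhds_zero_nat.smul_const (M := ℝ) v
  refine mem_closure_of_tendsto hlim (Eventually.of_forall fun n => ⟨n, ?_⟩)
  change _ = ‖_‖
  rw [norm_smul, hv, mul_one, Real.norm_of_nonneg (by positivity)]

lemma addHaar_preimage_norm_of_countable [MeasurableSpace V] [BorelSpace V]
    [FiniteDimensional ℝ V] [Nontrivial V] (μ : Measure V) [μ.IsAddHaarMeasure] {A : Set ℝ}
    (hA : A.Countable) : μ (norm ⁻¹' A) = 0 := by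
  have : norm ⁻¹' A = ⋃ t ∈ A, sphere (0 : V) t := by ext z; simp
  rw [this, measure_biUnion_null_iff hA]
  exact fun t _ => Measure.addHaar_sphere μ 0 t

end NormPreimage

lemma not_porous_preimage_norm_insert_zero_harmonicRadii :
    ¬ Porous (norm ⁻¹' insert 0 harmonicRadii) := by
  rintro ⟨c, hc, hporous⟩
  obtain ⟨n, hn⟩ := exists_nat_one_div_lt (lt_min (by positivity : 0 < c / 8) one_half_pos)
  set r : ℝ := 1 / ((n : ℝ) + 1)
  have hr : 0 < r := Nat.one_div_pos_of_nat
  have hrc : 8 * r < c := by linarith [min_le_left (c / 8) (1 / 2)]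
  have hr₁ : 2 * r < 1 := by linarith [min_le_right (c / 8) (1 / 2)]
  have hr_norm : ‖(r : ℂ)‖ = r := by rw [Complex.norm_real, Real.norm_of_nonneg hr.le]
  have hrE : ‖(r : ℂ)‖ ∈ insert 0 harmonicRadii := by
    rw [hr_norm]
    exact Or.inr ⟨n, rfl⟩
  obtain ⟨b, hball, hdisj⟩ := hporous (r : ℂ) hrE r hr
  have hb_center : b ∈ ball b (c * r) := mem_ball_self (by positivity)
  have hgap := Set.eq_empty_iff_forall_notMem.mp hdisj
  have hb : b ≠ 0 := fun hb => hgap b ⟨hb_center, by simp [hb]⟩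
  have hb_norm : ‖b‖ < 2 * r := by
    have := mem_ball.mp (hball hb_center)
    rw [dist_eq_norm] at this
    linarith [norm_sub_norm_le b (r : ℂ), hr_norm]
  obtain ⟨t, ht, hbt⟩ := exists_mem_harmonicRadii_abs_sub_lt (norm_pos_iff.mpr hb) (by linarith)
  have ht₀ : 0 ≤ t := by obtain ⟨m, rfl⟩ := ht; positivity
  obtain ⟨p, hp, hpb⟩ := exists_norm_eq_dist_eq hb ht₀
  refine hgap p ⟨mem_ball.mpr ?_, Or.inr (hp ▸ ht)⟩
  calc dist p b < 2 * ‖b‖ ^ 2 := hpb ▸ hbt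
    _ ≤ 2 * (2 * r) ^ 2 := by gcongr
    _ = 8 * r * r := by ring
    _ < c * r := by gcongr

/-- The set `E = {0} ∪ ⋃_{n≥1} C(0, 1/n)` (the closure of `⋃_{n≥1} C(0, 1/n)`)
is compact, has `m₂(E) = 0`, and is not porous. -/
theorem stmt14 (E : Set ℂ)
    (hE : E = {0} ∪ ⋃ (n : ℕ) (_ : 1 ≤ n), Metric.sphere (0 : ℂ) (1 / n)) :
    closure (⋃ (n : ℕ) (_ : 1 ≤ n), Metric.sphere (0 : ℂ) (1 / n)) = E ∧
      IsCompact E ∧ volume E = 0 ∧ ¬ Porous E := by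
  rw [iUnion_sphere_one_div_eq_preimage_norm] at hE ⊢
  rw [← Set.insert_eq, ← preimage_norm_insert_zero] at hE
  subst hE
  exact ⟨closure_preimage_norm_harmonicRadii,
    isCompact_preimage_norm isCompact_insert_zero_harmonicRadii,
    addHaar_preimage_norm_of_countable volume ((Set.countable_range _).insert 0),
    not_porous_preimage_norm_insert_zero_harmonicRadii⟩
end
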